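/- For all indices 1 ≤ a < b < c ≤ n and every symbol α ∈ {p, x, y}, in the presented group G the element p_{ab} α_{ac} p_{ab}^{-1} commutes with (t_b^{-1} y_{ab} t_b) x_{bc}: (p_{ab} α_{ac} p_{ab}^{-1})(t_b^{-1} y_{ab} t_b)(x_{bc}) =_R (t_b^{-1} y_{ab} t_b)(x_{bc})(p_{ab} α_{ac} p_{ab}^{-1}). -/

import Mathlib

/-! Relations (M-y) and (C-pt) give `t_b⁻¹ y_ab t_b = p_ab y_ab p_ab⁻¹`, and the (C2)
relations making `x_bc` commute with `p_ab p_ac` and with `y_ab p_ac` give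
`p_ab⁻¹ x_bc p_ab = p_ac x_bc p_ac⁻¹ = y_ab⁻¹ x_bc y_ab`. Hence
`(t_b⁻¹ y_ab t_b) x_bc = p_ab (x_bc y_ab) p_ab⁻¹`, and the claim is the `p_ab`-conjugate of
the (C2) relation saying that `α_ac` commutes with `x_bc y_ab`. -/

namespace PureHilden

/-- The three symbols `p`, `x`, `y`. -/
inductive Sym : Type
  | p | x | y
  deriving DecidableEq

open Sym

/-- Generators of the free group `F`:  `p_{ij}, x_{ij}, y_{ij}` for `1 ≤ i < j ≤ n`
and `t_k` for `1 ≤ k ≤ n`. -/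
inductive Gen (n : ℕ) : Type
  | pair (s : Sym) (i j : ℕ) (h : 1 ≤ i ∧ i < j ∧ j ≤ n) : Gen n
  | t (k : ℕ) (h : 1 ≤ k ∧ k ≤ n) : Gen n

/-- The free group `F` on the set `S`. -/
abbrev FG (n : ℕ) := FreeGroup (Gen n)

/-- `α_{ij}` (symmetrised: `α_{ji} = α_{ij}`); junk value `1` for invalid indices. -/
def gsym (n : ℕ) (s : Sym) (i j : ℕ) : FG n :=
  if h : 1 ≤ min i j ∧ min i j < max i j ∧ max i j ≤ n then
    FreeGroup.of (Gen.pair s (min i j) (max i j) h)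
  else 1

def P (n i j : ℕ) : FG n := gsym n Sym.p i j
def X (n i j : ℕ) : FG n := gsym n Sym.x i j
def Y (n i j : ℕ) : FG n := gsym n Sym.y i j

def T (n k : ℕ) : FG n :=
  if h : 1 ≤ k ∧ k ≤ n then FreeGroup.of (Gen.t k h) else 1

/-- `1 ≤ k ≤ n`. -/
def Idx (n k : ℕ) : Prop := 1 ≤ k ∧ k ≤ n

/-- `1 ≤ i < j ≤ n`. -/
def Idx2 (n i j : ℕ) : Prop := 1 ≤ i ∧ i < j ∧ j ≤ n

/-- `(i,j,k)` is a cyclic rotation of a strictly increasing triple. -/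
def cyc3 (i j k : ℕ) : Prop := (i < j ∧ j < k) ∨ (j < k ∧ k < i) ∨ (k < i ∧ i < j)

/-- `(i,j,k,l)` is a cyclic rotation of a strictly increasing quadruple. -/
def cyc4 (i j k l : ℕ) : Prop :=
  (i < j ∧ j < k ∧ k < l) ∨ (j < k ∧ k < l ∧ l < i) ∨
  (k < l ∧ l < i ∧ i < j) ∨ (l < i ∧ i < j ∧ j < k)

def c2A : List (Sym × Sym × Sym) :=
  [(p,p,p),(p,y,y),(x,p,p),(x,x,p),(x,y,y),(y,p,p),(y,p,x),(y,y,y)]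
def c2B : List (Sym × Sym × Sym) :=
  [(p,p,p),(p,x,y),(x,p,p),(x,p,x),(x,x,y),(y,p,p),(y,x,y),(y,y,p)]
def c2C : List (Sym × Sym × Sym) :=
  [(p,p,p),(p,x,x),(x,p,p),(x,x,x),(x,y,p),(y,p,p),(y,p,y),(y,x,x)]

/-- The allowed triples `(α,β,γ)` for relation (C2), by cyclic ordering of `(i,j,k)`. -/
def C2ok (i j k : ℕ) (a b c : Sym) : Prop :=
  (i < j ∧ j < k ∧ (a,b,c) ∈ c2A) ∨
  (j < k ∧ k < i ∧ (a,b,c) ∈ c2B) ∨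
  (k < i ∧ i < j ∧ (a,b,c) ∈ c2C)

/-- The relations `R`, encoded as the words `u * v⁻¹` for each relation `u = v`. -/
inductive Rel (n : ℕ) : FG n → Prop
  | cpt {i j k : ℕ} (hij : Idx2 n i j) (hk : Idx n k) :
      Rel n (P n i j * T n k * (T n k * P n i j)⁻¹)
  | ctt {i j : ℕ} (hi : Idx n i) (hj : Idx n j) :
      Rel n (T n i * T n j * (T n j * T n i)⁻¹)
  | cxt {i j k : ℕ} (hij : Idx2 n i j) (hk : Idx n k) (hne : k ≠ i) :
      Rel n (X n i j * T n k * (T n k * X n i j)⁻¹)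
  | cyt {i j k : ℕ} (hij : Idx2 n i j) (hk : Idx n k) (hne : k ≠ j) :
      Rel n (Y n i j * T n k * (T n k * Y n i j)⁻¹)
  | c1 (a b : Sym) {i j k l : ℕ} (hi : Idx n i) (hj : Idx n j) (hk : Idx n k)
      (hl : Idx n l) (hc : cyc4 i j k l) :
      Rel n (gsym n a i j * gsym n b k l * (gsym n b k l * gsym n a i j)⁻¹)
  | c2 (a b c : Sym) {i j k : ℕ} (hi : Idx n i) (hj : Idx n j) (hk : Idx n k)
      (h : C2ok i j k a b c) :
      Rel n (gsym n a i j * (gsym n b i k * gsym n c j k) *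
             (gsym n b i k * gsym n c j k * gsym n a i j)⁻¹)
  | c3 (a b : Sym) {i j k l : ℕ} (hi : Idx n i) (hj : Idx n j) (hk : Idx n k)
      (hl : Idx n l) (hc : cyc4 i j k l) :
      Rel n (gsym n a i k * (P n j k * gsym n b j l * (P n j k)⁻¹) *
             (P n j k * gsym n b j l * (P n j k)⁻¹ * gsym n a i k)⁻¹)
  | mx {i j : ℕ} (hij : Idx2 n i j) :
      Rel n (X n i j * P n i j * T n i * (P n i j * T n i * X n i j)⁻¹)
  | my {i j : ℕ} (hij : Idx2 n i j) :
      Rel n (Y n i j * P n i j * T n j * (P n i j * T n j * Y n i j)⁻¹)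

/-- The presented group `G = ⟨S ∣ R⟩`. -/
abbrev GG (n : ℕ) := FG n ⧸ Subgroup.normalClosure {w : FG n | Rel n w}

/-- The quotient homomorphism `π : F → G`. -/
def piG (n : ℕ) : FG n →* GG n := QuotientGroup.mk' _

/-- The map defining `Φ_{σ_m}` on generators. -/
def phiSigmaMap (n m : ℕ) : Gen n → FG n
  | Gen.pair s i j _ =>
      if i = m ∧ j = m + 1 then
        match s with
        | Sym.p => P n m (m+1)
        | Sym.x => (T n (m+1))⁻¹ * Y n m (m+1) * T n (m+1)
        | Sym.y => X n m (m+1)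
      else if i = m then gsym n s (m+1) j
      else if j = m then gsym n s (m+1) i
      else if i = m + 1 then P n m (m+1) * gsym n s m j * (P n m (m+1))⁻¹
      else if j = m + 1 then P n m (m+1) * gsym n s m i * (P n m (m+1))⁻¹
      else gsym n s i j
  | Gen.t k _ =>
      if k = m then T n (m+1) else if k = m + 1 then T n m else T n k

/-- `Φ_{σ_m} : F → F`. -/
def phiSigma (n m : ℕ) : FG n →* FG n := FreeGroup.lift (phiSigmaMap n m)

/-- The map defining `Ψ_{σ_m}` on generators. -/
def psiSigmaMap (n m : ℕ) : Gen n → FG n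
  | Gen.pair s i j _ =>
      if i = m ∧ j = m + 1 then
        match s with
        | Sym.p => P n m (m+1)
        | Sym.x => Y n m (m+1)
        | Sym.y => T n m * X n m (m+1) * (T n m)⁻¹
      else if i = m then (P n m (m+1))⁻¹ * gsym n s (m+1) j * P n m (m+1)
      else if j = m then (P n m (m+1))⁻¹ * gsym n s (m+1) i * P n m (m+1)
      else if i = m + 1 then gsym n s m j
      else if j = m + 1 then gsym n s m i
      else gsym n s i j
  | Gen.t k _ =>
      if k = m then T n (m+1) else if k = m + 1 then T n m else T n k

/-- `Ψ_{σ_m} : F → F`. -/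
def psiSigma (n m : ℕ) : FG n →* FG n := FreeGroup.lift (psiSigmaMap n m)

/-- The map defining `Φ_{τ_m}` on generators. -/
def phiTauMap (n m : ℕ) : Gen n → FG n
  | Gen.pair s i j _ =>
      match s with
      | Sym.p => P n i j
      | Sym.x => if m = i then (X n i j)⁻¹ * P n i j else X n i j
      | Sym.y => if m = j then (Y n i j)⁻¹ * P n i j else Y n i j
  | Gen.t k _ => T n k

/-- `Φ_{τ_m} : F → F`. -/
def phiTau (n m : ℕ) : FG n →* FG n := FreeGroup.lift (phiTauMap n m)

/-- The map defining `Ψ_{τ_m}` on generators. -/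
def psiTauMap (n m : ℕ) : Gen n → FG n
  | Gen.pair s i j _ =>
      match s with
      | Sym.p => P n i j
      | Sym.x => if m = i then P n i j * (X n i j)⁻¹ else X n i j
      | Sym.y => if m = j then P n i j * (Y n i j)⁻¹ else Y n i j
  | Gen.t k _ => T n k

/-- `Ψ_{τ_m} : F → F`. -/
def psiTau (n m : ℕ) : FG n →* FG n := FreeGroup.lift (psiTauMap n m)

lemma gsym_symm (n : ℕ) (s : Sym) (i j : ℕ) : gsym n s i j = gsym n s j i := by
  unfold gsym
  rw [min_comm, max_comm]

section GroupIdentities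

variable {G : Type*} [Group G]

lemma inv_mul_mul_eq_mul_mul_inv_of_commute_mul {x u v : G} (h : Commute x (u * v)) :
    u⁻¹ * x * u = v * x * v⁻¹ := by
  have hx : x = u * v * x * (u * v)⁻¹ := by rw [← h.eq]; group
  calc u⁻¹ * x * u = u⁻¹ * (u * v * x * (u * v)⁻¹) * u := by rw [← hx]
    _ = v * x * v⁻¹ := by group

lemma commute_conj_of_commute_relations {p t y x s q : G} (hy : Commute y (p * t))
    (hpt : Commute p t) (hxp : Commute x (p * q)) (hxy : Commute x (y * q))
    (hs : Commute s (x * y)) :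
    Commute (p * s * p⁻¹) (t⁻¹ * y * t * x) := by
  have hty : t⁻¹ * y * t = p * y * p⁻¹ :=
    inv_mul_mul_eq_mul_mul_inv_of_commute_mul (hpt.eq ▸ hy)
  have hpx : p⁻¹ * x * p = y⁻¹ * x * y :=
    (inv_mul_mul_eq_mul_mul_inv_of_commute_mul hxp).trans
      (inv_mul_mul_eq_mul_mul_inv_of_commute_mul hxy).symm
  have hconj : t⁻¹ * y * t * x = p * (x * y) * p⁻¹ := by
    calc t⁻¹ * y * t * x = p * y * (p⁻¹ * x * p) * p⁻¹ := by rw [hty]; group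
      _ = p * (x * y) * p⁻¹ := by rw [hpx]; group
  rw [hconj]
  simpa only [MulAut.conj_apply] using hs.map (MulAut.conj p)

end GroupIdentities

section Relations

variable {n : ℕ}

lemma commute_of_rel {u v : FG n} (h : Rel n (u * v * (v * u)⁻¹)) :
    Commute (piG n u) (piG n v) := by
  have hmem : u * v * (v * u)⁻¹ ∈ Subgroup.normalClosure {w : FG n | Rel n w} :=
    Subgroup.subset_normalClosure h
  rw [Commute, SemiconjBy, ← map_mul, ← map_mul, piG, QuotientGroup.mk'_apply,
    QuotientGroup.mk'_apply, QuotientGroup.eq_iff_div_mem, div_eq_mul_inv]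
  exact hmem

lemma commute_of_c2 {i j k : ℕ} {α β γ : Sym} (hi : Idx n i) (hj : Idx n j) (hk : Idx n k)
    (h : C2ok i j k α β γ) :
    Commute (piG n (gsym n α i j)) (piG n (gsym n β i k * gsym n γ j k)) :=
  commute_of_rel (Rel.c2 α β γ hi hj hk h)

variable {a b c : ℕ}

lemma commute_Y_P_mul_T (h : 1 ≤ a ∧ a < b ∧ b ≤ n) :
    Commute (piG n (Y n a b)) (piG n (P n a b) * piG n (T n b)) := by
  have hrel := Rel.my h
  rw [mul_assoc (Y n a b)] at hrel
  simpa only [map_mul] using commute_of_rel hrel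

lemma commute_P_T (h : 1 ≤ a ∧ a < b ∧ b ≤ n) : Commute (piG n (P n a b)) (piG n (T n b)) :=
  commute_of_rel (Rel.cpt h ⟨by omega, h.2.2⟩)

lemma commute_X_gsym_mul_P (h : 1 ≤ a ∧ a < b ∧ b < c ∧ c ≤ n) {β : Sym}
    (hβ : (Sym.x, β, Sym.p) ∈ c2C) :
    Commute (piG n (X n b c)) (piG n (gsym n β a b) * piG n (P n a c)) := by
  have hc2 := commute_of_c2 (n := n) (i := b) (j := c) (k := a) ⟨by omega, by omega⟩
    ⟨by omega, h.2.2.2⟩ ⟨h.1, by omega⟩ (Or.inr (Or.inr ⟨h.2.1, h.2.2.1, hβ⟩))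
  rw [gsym_symm n β b a, gsym_symm n Sym.p c a, map_mul] at hc2
  exact hc2

lemma commute_gsym_X_mul_Y (h : 1 ≤ a ∧ a < b ∧ b < c ∧ c ≤ n) (s : Sym) :
    Commute (piG n (gsym n s a c)) (piG n (X n b c) * piG n (Y n a b)) := by
  have hc2 := commute_of_c2 (n := n) (i := c) (j := a) (k := b) (α := s) (β := Sym.x)
    (γ := Sym.y) ⟨by omega, h.2.2.2⟩ ⟨h.1, by omega⟩ ⟨by omega, by omega⟩
    (Or.inr (Or.inl ⟨h.2.1, h.2.2.1, by cases s <;> decide⟩))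
  rw [gsym_symm n s c a, gsym_symm n Sym.x c b, map_mul] at hc2
  exact hc2

end Relations

theorem stmt19_general (n : ℕ) (a b c : ℕ)
    (h : 1 ≤ a ∧ a < b ∧ b < c ∧ c ≤ n) (s : Sym) :
    piG n (P n a b * gsym n s a c * (P n a b)⁻¹ *
           ((T n b)⁻¹ * Y n a b * T n b) * X n b c) =
    piG n ((T n b)⁻¹ * Y n a b * T n b * X n b c *
           (P n a b * gsym n s a c * (P n a b)⁻¹)) := by
  have hab : 1 ≤ a ∧ a < b ∧ b ≤ n := ⟨h.1, h.2.1, by omega⟩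
  have key := commute_conj_of_commute_relations (commute_Y_P_mul_T hab) (commute_P_T hab)
    (commute_X_gsym_mul_P h (β := Sym.p) (by decide))
    (commute_X_gsym_mul_P h (β := Sym.y) (by decide)) (commute_gsym_X_mul_Y h s)
  simp only [map_mul, map_inv]
  simpa only [mul_assoc] using key.eq

/-- STATEMENT 19: For `1 ≤ a < b < c ≤ n` and every symbol `α ∈ {p,x,y}`, in `G`
the element `p_ab α_ac p_ab⁻¹` commutes with `(t_b⁻¹ y_ab t_b) x_bc`. -/
theorem stmt19 (n : ℕ) (hn : 2 ≤ n) (a b c : ℕ)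
    (h : 1 ≤ a ∧ a < b ∧ b < c ∧ c ≤ n) (s : Sym) :
    piG n (P n a b * gsym n s a c * (P n a b)⁻¹ *
           ((T n b)⁻¹ * Y n a b * T n b) * X n b c) =
    piG n ((T n b)⁻¹ * Y n a b * T n b * X n b c *
           (P n a b * gsym n s a c * (P n a b)⁻¹)) :=
  stmt19_general n a b c h s

end PureHilden
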